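/- Let E be an election with Bucklin winning round k, let p be a designated candidate with nondecreasing cost functions π^i satisfying π^i(0)=0, and let t be a shift action that is minimal for making p a Bucklin winner. Then the Bucklin winning round ℓ of shf(E,t) satisfies k−1 ≤ ℓ ≤ k+1. -/

import Mathlib

/-- Shifting the designated candidate `p` upwards by `t i` positions in vote `i`. -/
def shiftRank {C : Type*} [DecidableEq C] {n : ℕ} (rank : Fin n → C → ℕ) (p : C)
    (t : Fin n → ℕ) : Fin n → C → ℕ := fun i c =>
  if c = p then max 1 (rank i p - t i)
  else if max 1 (rank i p - t i) ≤ rank i c ∧ rank i c < rank i p then rank i c + 1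
  else rank i c

/-- The `k`-Approval score of candidate `c`. -/
def approvalScoreAt {C : Type*} {n : ℕ} (rank : Fin n → C → ℕ) (k : ℕ) (c : C) : ℕ :=
  (Finset.univ.filter (fun i : Fin n => rank i c ≤ k)).card

/-- Candidate `c` has a majority at round `k`. -/
def majAt {C : Type*} {n : ℕ} (rank : Fin n → C → ℕ) (k : ℕ) (c : C) : Prop :=
  n / 2 + 1 ≤ approvalScoreAt rank k c

/-- `k` is the Bucklin winning round. -/
def IsBucklinRound {C : Type*} {n : ℕ} (rank : Fin n → C → ℕ) (k : ℕ) : Prop :=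
  IsLeast {j : ℕ | ∃ c : C, majAt rank j c} k

/-- `c` is a Bucklin winner. -/
def IsBucklinWinner {C : Type*} {n : ℕ} (rank : Fin n → C → ℕ) (c : C) : Prop :=
  ∃ k, IsBucklinRound rank k ∧
    ∀ c' : C, approvalScoreAt rank k c' ≤ approvalScoreAt rank k c

/-- The cost `Π(t)` of a shift action `t`. -/
def briberyCost {n : ℕ} (π : Fin n → ℕ → ℕ∞) (t : Fin n → ℕ) : ℕ∞ :=
  ∑ i, π i (t i)

/-!
Shifting `p` upwards moves every other candidate down by at most one position, so the original
majority candidate still has a majority at round `k + 1`, whence `ℓ ≤ k + 1`. No candidate other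
than `p` gains from a shift, so before round `k` only `p` can have a majority in a shifted election,
and whenever it does, `p` is a Bucklin winner. If `ℓ ≤ k - 2`, then `t ≠ 0` (otherwise `p`'s majority
at round `ℓ` would already exist in `E`), and undoing one unit of shift in one vote moves `p` down
by at most one position; so `p` still reaches a majority by round `ℓ + 1 < k` and wins with a
strictly smaller shift action, against minimality.
-/

section Bucklin

variable {C : Type*} {n : ℕ}

lemma majAt_of_forall_imp {r r' : Fin n → C → ℕ} {j j' : ℕ} {c c' : C}
    (h : majAt r j c) (himp : ∀ i, r i c ≤ j → r' i c' ≤ j') : majAt r' j' c' :=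
  h.trans <| Finset.card_le_card fun i hi => by
    simp only [Finset.mem_filter, Finset.mem_univ, true_and] at hi ⊢
    exact himp i hi

lemma exists_isBucklinRound_le {r : Fin n → C → ℕ} {j : ℕ} {c : C} (h : majAt r j c) :
    ∃ l, IsBucklinRound r l ∧ l ≤ j := by
  classical
  have hex : ∃ j, ∃ c, majAt r j c := ⟨j, c, h⟩
  exact ⟨Nat.find hex, ⟨Nat.find_spec hex, fun _ => Nat.find_min' hex⟩,
    Nat.find_min' hex ⟨c, h⟩⟩

lemma isBucklinWinner_of_isBucklinRound {r : Fin n → C → ℕ} {l : ℕ} {p : C}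
    (hl : IsBucklinRound r l) (hothers : ∀ c, c ≠ p → ¬ majAt r l c) : IsBucklinWinner r p := by
  have hp : majAt r l p := by
    obtain ⟨c, hc⟩ := hl.1
    by_cases hcp : c = p
    · exact hcp ▸ hc
    · exact absurd hc (hothers c hcp)
  refine ⟨l, hl, fun c => ?_⟩
  by_cases hcp : c = p
  · rw [hcp]
  · have := hothers c hcp
    unfold majAt at this hp
    omega

variable [DecidableEq C] (rank : Fin n → C → ℕ) (p : C)

lemma shiftRank_self (t : Fin n → ℕ) (i : Fin n) :
    shiftRank rank p t i p = max 1 (rank i p - t i) := by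
  simp [shiftRank]

lemma shiftRank_le_succ (t : Fin n → ℕ) (i : Fin n) (c : C) :
    shiftRank rank p t i c ≤ rank i c + 1 := by
  unfold shiftRank
  split_ifs with hcp
  · subst hcp
    omega
  all_goals omega

lemma rank_le_shiftRank {t : Fin n → ℕ} {i : Fin n} {c : C} (hc : c = p → t i = 0) :
    rank i c ≤ shiftRank rank p t i c := by
  unfold shiftRank
  split_ifs with hcp
  · subst hcp
    rw [hc rfl]
    omega
  all_goals omega

variable {rank p}

lemma majAt_of_majAt_shiftRank {t : Fin n → ℕ} {j : ℕ} {c : C} (hc : c = p → t = 0)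
    (h : majAt (shiftRank rank p t) j c) : majAt rank j c :=
  majAt_of_forall_imp h fun i hi =>
    (rank_le_shiftRank rank p fun hcp => congrFun (hc hcp) i).trans hi

lemma not_majAt_shiftRank_of_lt {k j : ℕ} (hk : IsBucklinRound rank k) (hj : j < k)
    (t : Fin n → ℕ) {c : C} (hc : c ≠ p) : ¬ majAt (shiftRank rank p t) j c := fun h =>
  absurd (hk.2 ⟨c, majAt_of_majAt_shiftRank (fun hcp => absurd hcp hc) h⟩) (by omega)

lemma isBucklinWinner_shiftRank_of_majAt_of_lt {k j : ℕ} (hk : IsBucklinRound rank k)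
    (hj : j < k) {s : Fin n → ℕ} (h : majAt (shiftRank rank p s) j p) :
    IsBucklinWinner (shiftRank rank p s) p := by
  obtain ⟨l, hl, hlj⟩ := exists_isBucklinRound_le h
  exact isBucklinWinner_of_isBucklinRound hl fun c hc =>
    not_majAt_shiftRank_of_lt hk (by omega) s hc

lemma majAt_shiftRank_update_pred {t : Fin n → ℕ} {j : ℕ} (i₀ : Fin n)
    (h : majAt (shiftRank rank p t) j p) :
    majAt (shiftRank rank p (Function.update t i₀ (t i₀ - 1))) (j + 1) p := by
  refine majAt_of_forall_imp h fun i hi => ?_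
  rw [shiftRank_self] at hi ⊢
  rcases eq_or_ne i i₀ with rfl | hne
  · rw [Function.update_self]
    omega
  · rw [Function.update_of_ne hne]
    omega

lemma le_succ_of_isBucklinRound_shiftRank {k ℓ : ℕ} {t : Fin n → ℕ}
    (hk : IsBucklinRound rank k) (hℓ : IsBucklinRound (shiftRank rank p t) ℓ) : ℓ ≤ k + 1 := by
  obtain ⟨c, hc⟩ := hk.1
  exact hℓ.2 ⟨c, majAt_of_forall_imp hc fun i hi =>
    (shiftRank_le_succ rank p t i c).trans (by omega)⟩

lemma exists_lt_isBucklinWinner_of_isBucklinRound_shiftRank {k ℓ : ℕ} {t : Fin n → ℕ}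
    (hk : IsBucklinRound rank k) (hℓ : IsBucklinRound (shiftRank rank p t) ℓ)
    (hlt : ℓ + 2 ≤ k) :
    ∃ s, s ≠ t ∧ (∀ i, s i ≤ t i) ∧ IsBucklinWinner (shiftRank rank p s) p := by
  obtain ⟨c, hc⟩ := hℓ.1
  obtain rfl : c = p := by
    by_contra hcp
    exact not_majAt_shiftRank_of_lt hk (by omega) t hcp hc
  obtain ⟨i₀, hi₀⟩ : ∃ i, t i ≠ 0 := by
    by_contra! ht
    have := hk.2 ⟨c, majAt_of_majAt_shiftRank (fun _ => funext ht) hc⟩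
    omega
  have hlt : Function.update t i₀ (t i₀ - 1) < t := update_lt_self_iff.2 (by omega)
  exact ⟨_, hlt.ne, hlt.le,
    isBucklinWinner_shiftRank_of_majAt_of_lt hk (by omega) (majAt_shiftRank_update_pred i₀ hc)⟩

end Bucklin

theorem statement7_general {C : Type*} [DecidableEq C] {n : ℕ}
    (rank : Fin n → C → ℕ)
    (p : C) (t : Fin n → ℕ)
    (hmin : ∀ s : Fin n → ℕ, s ≠ t → (∀ i, s i ≤ t i) →
      ¬ IsBucklinWinner (shiftRank rank p s) p)
    (k : ℕ) (hk : IsBucklinRound rank k)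
    (ℓ : ℕ) (hℓ : IsBucklinRound (shiftRank rank p t) ℓ) :
    k - 1 ≤ ℓ ∧ ℓ ≤ k + 1 := by
  refine ⟨?_, le_succ_of_isBucklinRound_shiftRank hk hℓ⟩
  by_contra hlt
  obtain ⟨s, hne, hle, hwin⟩ :=
    exists_lt_isBucklinWinner_of_isBucklinRound_shiftRank hk hℓ (by omega)
  exact hmin s hne hle hwin

/-- if `k` is the Bucklin winning round of the original election and `t` is a
minimal optimal shift action making `p` a Bucklin winner, then the Bucklin winning round
`ℓ` of the shifted election satisfies `k − 1 ≤ ℓ ≤ k + 1`. -/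
theorem statement7 {C : Type*} [Fintype C] [DecidableEq C] {n m : ℕ}
    (rank : Fin n → C → ℕ)
    (hcard : Fintype.card C = m)
    (hinj : ∀ i, Function.Injective (rank i))
    (hrange : ∀ i c, 1 ≤ rank i c ∧ rank i c ≤ m)
    (π : Fin n → ℕ → ℕ∞) (hπ0 : ∀ i, π i 0 = 0) (hπmono : ∀ i, Monotone (π i))
    (p : C) (t : Fin n → ℕ)
    (hwin : IsBucklinWinner (shiftRank rank p t) p)
    (hopt : ∀ s : Fin n → ℕ, IsBucklinWinner (shiftRank rank p s) p →
      briberyCost π t ≤ briberyCost π s)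
    (hmin : ∀ s : Fin n → ℕ, s ≠ t → (∀ i, s i ≤ t i) →
      ¬ IsBucklinWinner (shiftRank rank p s) p)
    (k : ℕ) (hk : IsBucklinRound rank k)
    (ℓ : ℕ) (hℓ : IsBucklinRound (shiftRank rank p t) ℓ) :
    k - 1 ≤ ℓ ∧ ℓ ≤ k + 1 :=
  statement7_general rank p t hmin k hk ℓ hℓ
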